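/- arXiv:2206.05841 — 2 statements merged into one kernel-verified Lean document; each statement's English description precedes it below -/
import Mathlib

section
/- Let F : ℝ≥0ⁿ → ℝ be continuously twice differentiable and one-sided σ-smooth, i.e. for all x ≥ 0 with x ≠ 0 and all u ≥ 0, uᵀ∇²F(x)u ≤ σ·(2‖u‖₁/‖x‖₁)·uᵀ∇F(x). Then for all x ∈ [0,1]ⁿ \ {0}, u ∈ [0,1]ⁿ and ε > 0 such that x + εu ∈ [0,1]ⁿ, we have uᵀ∇F(x + εu) ≤ (‖x + εu‖₁/‖x‖₁)^{2σ} · uᵀ∇F(x). -/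
open Finset Set

/-!
Along the segment `t ↦ x + t • u` put `g t = uᵀ∇F(x + t • u)`. For `x, u ≥ 0` the `ℓ¹`-norm is
additive, so `‖x + t • u‖₁ = a + t b` with `a = ‖x‖₁`, `b = ‖u‖₁`, and one-sided smoothness reads
`g' ≤ 2σ · (b / (a + t b)) · g`. Hence `(a + t b)^(-2σ) · g t` is antitone, and comparing `t = ε`
with `t = 0` gives the bound.
-/

theorem hasDerivAt_comp_add_smul {E G : Type*} [NormedAddCommGroup E] [NormedSpace ℝ E]
    [NormedAddCommGroup G] [NormedSpace ℝ G] {f : E → G} {x u : E} {t : ℝ}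
    (hf : DifferentiableAt ℝ f (x + t • u)) :
    HasDerivAt (fun s : ℝ => f (x + s • u)) (fderiv ℝ f (x + t • u) u) t := by
  have hline : HasDerivAt (fun s : ℝ => x + s • u) u t := by
    simpa using ((hasDerivAt_id t).smul_const u).const_add x
  exact hf.hasFDerivAt.comp_hasDerivAt t hline

theorem sum_abs_add_smul {ι : Type*} [Fintype ι] {x u : ι → ℝ} (hx : ∀ i, 0 ≤ x i)
    (hu : ∀ i, 0 ≤ u i) {t : ℝ} (ht : 0 ≤ t) :
    ∑ i, |(x + t • u) i| = ∑ i, |x i| + t * ∑ i, |u i| := by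
  simp only [Pi.add_apply, Pi.smul_apply, smul_eq_mul, mul_sum, ← sum_add_distrib]
  refine sum_congr rfl fun i _ => ?_
  rw [abs_of_nonneg (hx i), abs_of_nonneg (hu i), abs_of_nonneg (by nlinarith [hx i, hu i])]

theorem sum_abs_pos_of_ne_zero {ι : Type*} [Fintype ι] {x : ι → ℝ} (hx : x ≠ 0) :
    0 < ∑ i, |x i| := by
  obtain ⟨i, hi⟩ := Function.ne_iff.mp hx
  exact sum_pos' (fun j _ => abs_nonneg (x j)) ⟨i, mem_univ i, abs_pos.mpr hi⟩

def OneSidedSmooth {ι : Type*} [Fintype ι] (F : (ι → ℝ) → ℝ) (σ : ℝ) : Prop :=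
  ∀ x u : ι → ℝ, (∀ i, 0 ≤ x i) → x ≠ 0 → (∀ i, 0 ≤ u i) →
    fderiv ℝ (fun y => fderiv ℝ F y u) x u ≤
      σ * (2 * (∑ i, |u i|) / (∑ i, |x i|)) * fderiv ℝ F x u

theorem OneSidedSmooth.fderiv_le_along_ray {ι : Type*} [Fintype ι] {F : (ι → ℝ) → ℝ} {σ : ℝ}
    (hF : OneSidedSmooth F σ) {x u : ι → ℝ} (hx : ∀ i, 0 ≤ x i) (hx0 : x ≠ 0)
    (hu : ∀ i, 0 ≤ u i) {t : ℝ} (ht : 0 ≤ t) :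
    fderiv ℝ (fun y => fderiv ℝ F y u) (x + t • u) u ≤
      2 * σ * ((∑ i, |u i|) / (∑ i, |x i| + t * ∑ i, |u i|)) * fderiv ℝ F (x + t • u) u := by
  have hnorm := sum_abs_add_smul hx hu ht
  have hpos : 0 < ∑ i, |x i| + t * ∑ i, |u i| := by
    have := sum_abs_pos_of_ne_zero hx0
    positivity
  have hpt i : 0 ≤ (x + t • u) i := by simpa using add_nonneg (hx i) (mul_nonneg ht (hu i))
  have hpt0 : x + t • u ≠ 0 := fun h => by
    simp only [h, Pi.zero_apply, abs_zero, sum_const_zero] at hnorm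
    exact hpos.ne' hnorm.symm
  calc _ ≤ σ * (2 * (∑ i, |u i|) / (∑ i, |x i| + t * ∑ i, |u i|)) * fderiv ℝ F (x + t • u) u := by
        simpa only [hnorm] using hF _ u hpt hpt0 hu
    _ = _ := by ring

section LinearDifferentialInequality

variable {φ φ' g g' : ℝ → ℝ} {p t₀ t₁ : ℝ}

theorem antitoneOn_rpow_neg_mul_of_deriv_le
    (hφc : ContinuousOn φ (Icc t₀ t₁)) (hgc : ContinuousOn g (Icc t₀ t₁))
    (hφ : ∀ t ∈ Ioo t₀ t₁, HasDerivAt φ (φ' t) t) (hg : ∀ t ∈ Ioo t₀ t₁, HasDerivAt g (g' t) t)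
    (hpos : ∀ t ∈ Icc t₀ t₁, 0 < φ t) (hle : ∀ t ∈ Ioo t₀ t₁, g' t ≤ p * (φ' t / φ t) * g t) :
    AntitoneOn (fun t => φ t ^ (-p) * g t) (Icc t₀ t₁) := by
  refine antitoneOn_of_hasDerivWithinAt_nonpos (convex_Icc t₀ t₁)
    ((hφc.rpow_const fun t ht => Or.inl (hpos t ht).ne').mul hgc) (fun t ht => ?_) (fun t ht => ?_)
    (f' := fun t => φ' t * (-p) * φ t ^ (-p - 1) * g t + φ t ^ (-p) * g' t)
  all_goals rw [interior_Icc] at ht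
  · exact (((hφ t ht).rpow_const (Or.inl (hpos t (Ioo_subset_Icc_self ht)).ne')).mul
      (hg t ht)).hasDerivWithinAt
  · have hφt := hpos t (Ioo_subset_Icc_self ht)
    have hpow : φ t ^ (-p - 1) = φ t ^ (-p) / φ t := by rw [Real.rpow_sub hφt, Real.rpow_one]
    -- the derivative is `φ t ^ (-p) * (g' t - p * (φ' t / φ t) * g t)`
    have hcancel : φ' t * (-p) * (φ t ^ (-p) / φ t) * g t
        + φ t ^ (-p) * (p * (φ' t / φ t) * g t) = 0 := by ring
    rw [hpow]
    nlinarith [mul_le_mul_of_nonneg_left (hle t ht) (Real.rpow_pos_of_pos hφt (-p)).le]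

theorem le_rpow_div_mul_of_deriv_le (h₀₁ : t₀ ≤ t₁)
    (hφc : ContinuousOn φ (Icc t₀ t₁)) (hgc : ContinuousOn g (Icc t₀ t₁))
    (hφ : ∀ t ∈ Ioo t₀ t₁, HasDerivAt φ (φ' t) t) (hg : ∀ t ∈ Ioo t₀ t₁, HasDerivAt g (g' t) t)
    (hpos : ∀ t ∈ Icc t₀ t₁, 0 < φ t) (hle : ∀ t ∈ Ioo t₀ t₁, g' t ≤ p * (φ' t / φ t) * g t) :
    g t₁ ≤ (φ t₁ / φ t₀) ^ p * g t₀ := by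
  have h₀ := hpos t₀ (left_mem_Icc.mpr h₀₁)
  have h₁ := hpos t₁ (right_mem_Icc.mpr h₀₁)
  have hanti := antitoneOn_rpow_neg_mul_of_deriv_le hφc hgc hφ hg hpos hle
    (left_mem_Icc.mpr h₀₁) (right_mem_Icc.mpr h₀₁) h₀₁
  calc g t₁ = φ t₁ ^ p * (φ t₁ ^ (-p) * g t₁) := by
        rw [← mul_assoc, ← Real.rpow_add h₁, add_neg_cancel, Real.rpow_zero, one_mul]
    _ ≤ φ t₁ ^ p * (φ t₀ ^ (-p) * g t₀) :=
        mul_le_mul_of_nonneg_left hanti (Real.rpow_pos_of_pos h₁ p).le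
    _ = (φ t₁ / φ t₀) ^ p * g t₀ := by
        rw [Real.div_rpow h₁.le h₀.le, Real.rpow_neg h₀.le, div_eq_mul_inv, mul_assoc]

end LinearDifferentialInequality

theorem oss_gradient_growth_general
    (n : ℕ) (F : (Fin n → ℝ) → ℝ) (σ : ℝ)
    (hF : ContDiff ℝ 2 F)
    (hOSS : ∀ x u : Fin n → ℝ, (∀ i, 0 ≤ x i) → x ≠ 0 → (∀ i, 0 ≤ u i) →
      fderiv ℝ (fun y => fderiv ℝ F y u) x u ≤
        σ * (2 * (∑ i, |u i|) / (∑ i, |x i|)) * fderiv ℝ F x u)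
    (x u : Fin n → ℝ)
    (hx : ∀ i, 0 ≤ x i ∧ x i ≤ 1) (hx0 : x ≠ 0)
    (hu : ∀ i, 0 ≤ u i ∧ u i ≤ 1)
    (ε : ℝ) (hε : 0 < ε) :
    fderiv ℝ F (x + ε • u) u ≤
      ((∑ i, |x i + ε * u i|) / (∑ i, |x i|)) ^ (2 * σ) * fderiv ℝ F x u := by
  have hxnn i : 0 ≤ x i := (hx i).1
  have hunn i : 0 ≤ u i := (hu i).1
  have ha : 0 < ∑ i, |x i| := sum_abs_pos_of_ne_zero hx0
  have hb : 0 ≤ ∑ i, |u i| := by positivity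
  have hφ t : HasDerivAt (fun s => ∑ i, |x i| + s * ∑ i, |u i|) (∑ i, |u i|) t := by
    simpa using ((hasDerivAt_id t).mul_const (∑ i, |u i|)).const_add (∑ i, |x i|)
  have hdiff : Differentiable ℝ fun y => fderiv ℝ F y u :=
    ((hF.fderiv_right le_rfl).clm_apply contDiff_const).differentiable one_ne_zero
  have hg t := hasDerivAt_comp_add_smul (x := x) (u := u) (t := t) (hdiff _)
  have hgrowth := le_rpow_div_mul_of_deriv_le hε.le
    (fun t _ => (hφ t).continuousAt.continuousWithinAt)
    (fun t _ => (hg t).continuousAt.continuousWithinAt)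
    (fun t _ => hφ t) (fun t _ => hg t) (fun t ht => by nlinarith [ht.1])
    fun t ht => OneSidedSmooth.fderiv_le_along_ray hOSS hxnn hx0 hunn ht.1.le
  simpa [← sum_abs_add_smul hxnn hunn hε.le] using hgrowth

/-- For a C² one-sided σ-smooth function `F` on `ℝⁿ`,
for `x ∈ [0,1]ⁿ \ {0}`, `u ∈ [0,1]ⁿ`, `ε > 0` with `x + εu ∈ [0,1]ⁿ`, we have
`uᵀ∇F(x + εu) ≤ (‖x+εu‖₁/‖x‖₁)^{2σ} · uᵀ∇F(x)`. -/
theorem oss_gradient_growth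
    (n : ℕ) (F : (Fin n → ℝ) → ℝ) (σ : ℝ) (hσ : 0 ≤ σ)
    (hF : ContDiff ℝ 2 F)
    (hOSS : ∀ x u : Fin n → ℝ, (∀ i, 0 ≤ x i) → x ≠ 0 → (∀ i, 0 ≤ u i) →
      fderiv ℝ (fun y => fderiv ℝ F y u) x u ≤
        σ * (2 * (∑ i, |u i|) / (∑ i, |x i|)) * fderiv ℝ F x u)
    (x u : Fin n → ℝ)
    (hx : ∀ i, 0 ≤ x i ∧ x i ≤ 1) (hx0 : x ≠ 0)
    (hu : ∀ i, 0 ≤ u i ∧ u i ≤ 1)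
    (ε : ℝ) (hε : 0 < ε)
    (hxu : ∀ i, 0 ≤ x i + ε * u i ∧ x i + ε * u i ≤ 1) :
    fderiv ℝ F (x + ε • u) u ≤
      ((∑ i, |x i + ε * u i|) / (∑ i, |x i|)) ^ (2 * σ) * fderiv ℝ F x u :=
  oss_gradient_growth_general n F σ hF hOSS x u hx hx0 hu ε hε
end

section
/- Let M ∈ ℝⁿˣⁿ be a nonnegative symmetric σ-semi-metric matrix, i.e. M_{ij} ≤ σ(M_{ik} + M_{kj}) for all i,j,k ∈ [n], and let b ∈ ℝ≥0ⁿ. Then F(x) = ½xᵀMx + bᵀx satisfies, for all x ≥ 0 and all i,j: ‖x‖₁ · M_{ij} ≤ σ·(∇ᵢF(x) + ∇ⱼF(x)), where ∇F(x) = Mx + b. -/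
open Finset

/-- For a nonnegative symmetric σ-semi-metric matrix `M` and `b ≥ 0`,
the function `F(x) = ½xᵀMx + bᵀx` with gradient `∇F(x) = Mx + b` satisfies
`‖x‖₁ · M_{ij} ≤ σ·(∇ᵢF(x) + ∇ⱼF(x))` for all `x ≥ 0` and all `i, j`. -/
theorem semimetric_quadratic_oss_bound
    (n : ℕ) (M : Matrix (Fin n) (Fin n) ℝ) (b : Fin n → ℝ) (σ : ℝ) (hσ : 0 ≤ σ)
    (hMnonneg : ∀ i j, 0 ≤ M i j)
    (hMsymm : M.IsSymm)
    (hMsemi : ∀ i j k : Fin n, M i j ≤ σ * (M i k + M k j))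
    (hb : ∀ i, 0 ≤ b i) :
    ∀ x : Fin n → ℝ, (∀ i, 0 ≤ x i) → ∀ i j : Fin n,
      (∑ k, x k) * M i j ≤ σ * ((M.mulVec x + b) i + (M.mulVec x + b) j) := by
  intro x hx i j
  have hsym : ∀ a c, M a c = M c a := fun a c => (Matrix.IsSymm.apply hMsymm c a)
  have h1 : (∑ k, x k) * M i j ≤ σ * (∑ k, M i k * x k + ∑ k, M j k * x k) := by
    rw [Finset.sum_mul, ← Finset.sum_add_distrib, Finset.mul_sum]
    apply Finset.sum_le_sum
    intro k _
    have := hMsemi i j k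
    calc x k * M i j ≤ x k * (σ * (M i k + M k j)) :=
          mul_le_mul_of_nonneg_left this (hx k)
      _ = σ * (M i k * x k + M j k * x k) := by rw [hsym j k]; ring
  refine h1.trans ?_
  apply mul_le_mul_of_nonneg_left _ hσ
  simp only [Pi.add_apply, Matrix.mulVec, dotProduct]
  have := hb i; have := hb j
  linarith
end
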